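/- Let p be an odd prime, G = ℤ_p, M a real representation of G, and θ ∈ M nonzero. For each k = 0, ..., (p-1)/2, the elements θ^k = Σ_{i=0}^{p-1} Re(λ^{ki})·(λ^i·θ) and θ̄^k = Σ_{i=0}^{p-1} Im(λ^{ki})·(λ^i·θ) have annihilator ideal containing m^k; i.e., every element of m^k annihilates θ^k and θ̄^k. -/

import Mathlib

/-- `λ = e^{2πi/p}`. -/
noncomputable def zeta (p : ℕ) : ℂ := Complex.exp (2 * Real.pi * Complex.I / p)

/-- The group element `λ^i` of `ℤ_p`, viewed inside the real group ring `ℝ[ℤ_p]`. -/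
noncomputable def grpElt (p : ℕ) [NeZero p] (i : ℕ) :
    MonoidAlgebra ℝ (Multiplicative (ZMod p)) :=
  MonoidAlgebra.of ℝ (Multiplicative (ZMod p)) (Multiplicative.ofAdd (i : ZMod p))

/-- `a_k = Σ_{i=0}^{p-1} Re(λ^{ki})·λ^i` in `ℝ[ℤ_p]`. -/
noncomputable def aElt (p : ℕ) [NeZero p] (k : ℕ) :
    MonoidAlgebra ℝ (Multiplicative (ZMod p)) :=
  ∑ i ∈ Finset.range p, (zeta p ^ (k * i)).re • grpElt p i

/-- `b_k = Σ_{i=0}^{p-1} Im(λ^{ki})·λ^i` in `ℝ[ℤ_p]`. -/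
noncomputable def bElt (p : ℕ) [NeZero p] (k : ℕ) :
    MonoidAlgebra ℝ (Multiplicative (ZMod p)) :=
  ∑ i ∈ Finset.range p, (zeta p ^ (k * i)).im • grpElt p i

/-- `I_k ⊆ ℝ[ℤ_p]`, the real span of `a_k` and `b_k`. -/
noncomputable def Icomp (p : ℕ) [NeZero p] (k : ℕ) :
    Submodule ℝ (MonoidAlgebra ℝ (Multiplicative (ZMod p))) :=
  Submodule.span ℝ {aElt p k, bElt p k}

/-- `m^k = ⊕_{j ≠ k} I_j`, the ideal of elements whose `I_k`-component vanishes. -/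
noncomputable def mSub (p : ℕ) [NeZero p] (k : ℕ) :
    Submodule ℝ (MonoidAlgebra ℝ (Multiplicative (ZMod p))) :=
  ⨆ j ∈ (Finset.range ((p - 1) / 2 + 1)).erase k, Icomp p j

/-- The generator `λ` of `ℤ_p`. -/
def gen (p : ℕ) : Multiplicative (ZMod p) := Multiplicative.ofAdd (1 : ZMod p)

/-! The ideal `m^k` is spanned by the `a_j, b_j` with `j ≠ k`, and the action of
`Σ_z d(z) λ^{-z}` on `Σ_m c(m) λ^m θ` convolves the coefficient functions `d` and `c`.
Writing `Im u = Re (-i u)`, all coefficient functions in sight have the form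
`z ↦ Re (w λ^{jz})`, and `Re a · Re b = (Re (a b) + Re (a b̄)) / 2` turns each convolution
into sums of the characters `z ↦ λ^{(j ± k) z}` of `ℤ/p`, which vanish because
`0 < j + k < p` and `j ≠ k`. -/

open Finset Complex

namespace ZMod

theorem natCast_add_ne_zero_of_le_half {N j k : ℕ} (hj : j ≤ (N - 1) / 2)
    (hk : k ≤ (N - 1) / 2) (hjk : j ≠ k) : (j : ZMod N) + k ≠ 0 := by
  rw [← Nat.cast_add, Ne, natCast_eq_zero_iff]
  intro hdvd
  have := Nat.eq_zero_of_dvd_of_lt hdvd (by omega)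
  omega

theorem natCast_sub_ne_zero_of_le_half {N j k : ℕ} (hj : j ≤ (N - 1) / 2)
    (hk : k ≤ (N - 1) / 2) (hjk : j ≠ k) : (j : ZMod N) - k ≠ 0 := by
  rw [sub_ne_zero, Ne, natCast_eq_natCast_iff', Nat.mod_eq_of_lt (by omega),
    Nat.mod_eq_of_lt (by omega)]
  exact hjk

variable {N : ℕ} [NeZero N]

theorem sum_range_natCast {X : Type*} [AddCommMonoid X] (f : ZMod N → X) :
    ∑ i ∈ range N, f i = ∑ z, f z :=
  sum_nbij' Nat.cast val (by simp) (by simp [val_lt])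
    (fun i hi => val_cast_of_lt (mem_range.1 hi)) (fun z _ => natCast_zmod_val z) (fun _ _ => rfl)

theorem sum_stdAddChar_add_mul {c : ZMod N} (hc : c ≠ 0) (n : ZMod N) :
    ∑ z, stdAddChar (n + c * z) = 0 := by
  simp only [AddChar.map_add_eq_mul, ← mul_sum, mul_comm c]
  rw [AddChar.sum_mulShift c (isPrimitive_stdAddChar N), if_neg hc, Nat.cast_zero, mul_zero]

end ZMod

open ZMod (stdAddChar)

theorem zeta_pow_eq_stdAddChar (N : ℕ) [NeZero N] (m : ℕ) :
    zeta N ^ m = stdAddChar (m : ZMod N) := by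
  rw [← Int.cast_natCast (R := ZMod N) m, ZMod.stdAddChar_coe, zeta, ← Complex.exp_nat_mul]
  push_cast
  ring_nf

theorem sum_range_zeta_pow_mul {N : ℕ} [NeZero N] {X : Type*} [AddCommMonoid X] (k : ℕ)
    (g : ℂ → ZMod N → X) :
    ∑ i ∈ range N, g (zeta N ^ (k * i)) i = ∑ z, g (stdAddChar ((k : ZMod N) * z)) z := by
  rw [← ZMod.sum_range_natCast]
  simp only [zeta_pow_eq_stdAddChar, Nat.cast_mul]

theorem gen_pow (N i : ℕ) : gen N ^ i = Multiplicative.ofAdd (i : ZMod N) := by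
  rw [gen, ← ofAdd_nsmul, nsmul_one]

theorem Complex.re_mul_re_eq (a b : ℂ) :
    a.re * b.re = ((a * b).re + (a * (starRingEnd ℂ) b).re) / 2 := by
  simp only [mul_re, conj_re, conj_im]
  ring

theorem sum_re_mul_re_stdAddChar_eq_zero {N : ℕ} [NeZero N] {j k : ZMod N} (hadd : j + k ≠ 0)
    (hsub : j - k ≠ 0) (w w' : ℂ) (n : ZMod N) :
    ∑ z, (w * stdAddChar (j * z)).re * (w' * stdAddChar (k * (n + z))).re = 0 := by
  have hprod (z : ZMod N) : stdAddChar (j * z) * stdAddChar (k * (n + z)) =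
      stdAddChar (k * n + (j + k) * z) := by
    rw [← AddChar.map_add_eq_mul]; ring_nf
  have hprod' (z : ZMod N) : stdAddChar (j * z) * (starRingEnd ℂ) (stdAddChar (k * (n + z))) =
      stdAddChar (-(k * n) + (j - k) * z) := by
    rw [← AddChar.map_neg_eq_conj, ← AddChar.map_add_eq_mul]; ring_nf
  calc ∑ z, (w * stdAddChar (j * z)).re * (w' * stdAddChar (k * (n + z))).re
      = ((w * w' * ∑ z, stdAddChar (k * n + (j + k) * z)).re
          + (w * (starRingEnd ℂ) w' * ∑ z, stdAddChar (-(k * n) + (j - k) * z)).re) / 2 := by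
        simp only [Complex.re_mul_re_eq, ← sum_div, sum_add_distrib, ← re_sum, mul_sum,
          ← hprod, ← hprod', map_mul]
        congr 3 <;> refine sum_congr rfl fun z _ => by ring
    _ = 0 := by simp [ZMod.sum_stdAddChar_add_mul hadd, ZMod.sum_stdAddChar_add_mul hsub]

namespace Representation

variable {k G M : Type*} [CommSemiring k] [Group G] [Fintype G] [AddCommMonoid M] [Module k M]
  (ρ : Representation k G M)

/-- The paper's convention: `α = Σ_g a_g g⁻¹` acts on `x` as `Σ_g a_g (g • x)`. -/
def invAct (x : M) : MonoidAlgebra k G →ₗ[k] M where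
  toFun α := ∑ σ, α.coeff σ⁻¹ • ρ σ x
  map_add' α β := by simp [MonoidAlgebra.coeff_add, add_smul, sum_add_distrib]
  map_smul' c α := by simp [smul_sum, mul_smul]

theorem invAct_apply (x : M) (α : MonoidAlgebra k G) :
    ρ.invAct x α = ∑ σ, α.coeff σ⁻¹ • ρ σ x := rfl

theorem invAct_of (x : M) (g : G) : ρ.invAct x (MonoidAlgebra.of k G g) = ρ g⁻¹ x := by
  classical
  simp [invAct_apply, Finsupp.single_apply, eq_comm (a := g), inv_eq_iff_eq_inv]

theorem invAct_sum_smul_of {N : ℕ} [NeZero N]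
    (ρ : Representation k (Multiplicative (ZMod N)) M) (c d : ZMod N → k) (θ : M) :
    ρ.invAct (∑ m, c m • ρ (.ofAdd m) θ)
        (∑ z, d z • MonoidAlgebra.of k (Multiplicative (ZMod N)) (.ofAdd z)) =
      ∑ n, (∑ z, d z * c (n + z)) • ρ (.ofAdd n) θ := by
  have htranslate (z : ZMod N) : ρ (.ofAdd z)⁻¹ (∑ m, c m • ρ (.ofAdd m) θ) =
      ∑ n, c (n + z) • ρ (.ofAdd n) θ := by
    rw [map_sum]
    refine Fintype.sum_equiv (Equiv.subRight z) _ _ fun m => ?_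
    rw [LinearMap.map_smul, ← Module.End.mul_apply, ← map_mul, ← ofAdd_neg, ← ofAdd_add]
    simp [sub_eq_neg_add]
  simp only [map_sum, LinearMap.map_smul, invAct_of, htranslate, smul_sum, smul_smul]
  rw [sum_comm]
  simp only [sum_smul]

end Representation

section

variable {N : ℕ} [NeZero N]

theorem aElt_eq_sum (j : ℕ) :
    aElt N j = ∑ z, (stdAddChar ((j : ZMod N) * z)).re •
      MonoidAlgebra.of ℝ (Multiplicative (ZMod N)) (.ofAdd z) := by
  simp only [aElt, grpElt]
  exact sum_range_zeta_pow_mul j fun u z =>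
    u.re • MonoidAlgebra.of ℝ (Multiplicative (ZMod N)) (.ofAdd z)

theorem bElt_eq_sum (j : ℕ) :
    bElt N j = ∑ z, (-I * stdAddChar ((j : ZMod N) * z)).re •
      MonoidAlgebra.of ℝ (Multiplicative (ZMod N)) (.ofAdd z) := by
  simp only [bElt, grpElt, neg_mul, neg_re, I_mul_re, neg_neg]
  exact sum_range_zeta_pow_mul j fun u z =>
    u.im • MonoidAlgebra.of ℝ (Multiplicative (ZMod N)) (.ofAdd z)

variable {M : Type*} [AddCommMonoid M] [Module ℝ M]
  (ρ : Representation ℝ (Multiplicative (ZMod N)) M) (θ : M)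

theorem invAct_sum_re_stdAddChar_eq_zero {j k : ZMod N} (hadd : j + k ≠ 0) (hsub : j - k ≠ 0)
    (w w' : ℂ) :
    ρ.invAct (∑ m, (w' * stdAddChar (k * m)).re • ρ (.ofAdd m) θ)
      (∑ z, (w * stdAddChar (j * z)).re •
        MonoidAlgebra.of ℝ (Multiplicative (ZMod N)) (.ofAdd z)) = 0 := by
  rw [Representation.invAct_sum_smul_of]
  simp only [sum_re_mul_re_stdAddChar_eq_zero hadd hsub, zero_smul, sum_const_zero]

theorem mSub_le_ker_invAct {k : ℕ} (hk : k ≤ (N - 1) / 2) (w : ℂ) :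
    mSub N k ≤ LinearMap.ker
      (ρ.invAct (∑ m, (w * stdAddChar ((k : ZMod N) * m)).re • ρ (.ofAdd m) θ)) := by
  refine iSup₂_le fun j hj => ?_
  obtain ⟨hjk, hj_range⟩ := mem_erase.1 hj
  have hj : j ≤ (N - 1) / 2 := Nat.lt_succ_iff.1 (mem_range.1 hj_range)
  have hadd := ZMod.natCast_add_ne_zero_of_le_half hj hk hjk
  have hsub := ZMod.natCast_sub_ne_zero_of_le_half hj hk hjk
  rw [Icomp, Submodule.span_le, Set.insert_subset_iff, Set.singleton_subset_iff]
  constructor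
  · simpa only [SetLike.mem_coe, LinearMap.mem_ker, aElt_eq_sum, one_mul] using
      invAct_sum_re_stdAddChar_eq_zero ρ θ hadd hsub 1 w
  · simpa only [SetLike.mem_coe, LinearMap.mem_ker, bElt_eq_sum] using
      invAct_sum_re_stdAddChar_eq_zero ρ θ hadd hsub (-I) w

end

theorem mSub_annihilates_general (p : ℕ) [Fact p.Prime]
    (M : Type) [AddCommGroup M] [Module ℝ M]
    (ρ : Representation ℝ (Multiplicative (ZMod p)) M) (θ : M)
    (k : ℕ) (hk : k ≤ (p - 1) / 2)
    (α : MonoidAlgebra ℝ (Multiplicative (ZMod p))) (hα : α ∈ mSub p k) :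
    (∑ σ, α.coeff σ⁻¹ • ρ σ (∑ i ∈ Finset.range p, (zeta p ^ (k * i)).re • ρ (gen p ^ i) θ) = 0) ∧
    (∑ σ, α.coeff σ⁻¹ • ρ σ (∑ i ∈ Finset.range p, (zeta p ^ (k * i)).im • ρ (gen p ^ i) θ) = 0) := by
  simp only [gen_pow]
  rw [sum_range_zeta_pow_mul k fun u z => u.re • ρ (.ofAdd z) θ,
    sum_range_zeta_pow_mul k fun u z => u.im • ρ (.ofAdd z) θ,
    ← Representation.invAct_apply, ← Representation.invAct_apply]
  constructor
  · simpa only [one_mul] using LinearMap.mem_ker.1 (mSub_le_ker_invAct ρ θ hk 1 hα)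
  · simpa only [neg_mul, neg_re, I_mul_re, neg_neg] using
      LinearMap.mem_ker.1 (mSub_le_ker_invAct ρ θ hk (-I) hα)

/-- Let `p` be an odd prime, `G = ℤ_p` generated by `λ`, `M` a real representation
of `G`, and `θ ∈ M` nonzero.  For each `0 ≤ k ≤ (p-1)/2`, every element of the
ideal `m^k` (elements whose `I_k`-component vanishes) annihilates both
`θ^k = Σ_i Re(λ^{ki})·(λ^i·θ)` and `θ̄^k = Σ_i Im(λ^{ki})·(λ^i·θ)`,
where `α = Σ a_g·g⁻¹` annihilates `x` means `Σ a_g (g·x) = 0`. -/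
theorem mSub_annihilates (p : ℕ) [Fact p.Prime] (hodd : Odd p)
    (M : Type) [AddCommGroup M] [Module ℝ M]
    (ρ : Representation ℝ (Multiplicative (ZMod p)) M) (θ : M) (hθ : θ ≠ 0)
    (k : ℕ) (hk : k ≤ (p - 1) / 2)
    (α : MonoidAlgebra ℝ (Multiplicative (ZMod p))) (hα : α ∈ mSub p k) :
    (∑ σ, α.coeff σ⁻¹ • ρ σ (∑ i ∈ Finset.range p, (zeta p ^ (k * i)).re • ρ (gen p ^ i) θ) = 0) ∧
    (∑ σ, α.coeff σ⁻¹ • ρ σ (∑ i ∈ Finset.range p, (zeta p ^ (k * i)).im • ρ (gen p ^ i) θ) = 0) :=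
  mSub_annihilates_general p M ρ θ k hk α hα
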